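/- Fix x > 0 and let L = {x·v : v ∈ ℤ³} ∪ {x·(v + (1/2, 1/2, 1/2)) : v ∈ ℤ³} ⊂ ℝ³ be the body-centered cubic lattice of edge length x. Let F = {(0,0,0), (x,0,0), (x/2, x/2, x/2)}, a face of the body-centered cubic tetrahedral grid. Then the minimum bounding ball of F has center c = (x/2, x/8, x/8) and radius (3√2/8)·x, the infimum of ‖p − c‖ over p ∈ L \ F equals (√34/8)·x and is attained (for instance at (x/2, x/2, −x/2)), and hence the signed distance inf_{p ∈ L \ F} ‖p − c‖ − (3√2/8)·x equals ((√34 − 3√2)/8)·x, which is strictly positive; in particular F satisfies the Minimum-Ball condition with respect to L. -/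

import Mathlib

/-!
The vertices of `F` are at squared distance `18 x² / 64` from `c`, and
`c = lineMap (lineMap v₀ v₁ ½) v₂ ¼` lies in their plane. For a cube corner `x • (k, l, m)`
(resp. a body centre `x • (k + ½, l + ½, m + ½)`) with `k, l, m ∈ ℤ`, the squared distance to `c`
is `x² / 64` times the integer `16 (2k - 1)² + (8l - 1)² + (8m - 1)²`
(resp. `64 k² + (8l + 3)² + (8m + 3)²`), which is at least `34` except at the vertices of `F`.
Hence every other lattice point lies at distance at least `√34 / 8 · x > 3√2 / 8 · x` from `c`,
with equality at `x • (½, ½, -½)`.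
-/
/-- A point of Euclidean 3-space with the given coordinates. -/
noncomputable def pt3 (a b c : ℝ) : EuclideanSpace ℝ (Fin 3) :=
  (WithLp.equiv 2 (Fin 3 → ℝ)).symm ![a, b, c]

theorem dist_pt3 (a b c d e f : ℝ) :
    dist (pt3 a b c) (pt3 d e f) = √((a - d) ^ 2 + (b - e) ^ 2 + (c - f) ^ 2) := by
  simp [pt3, EuclideanSpace.dist_eq, Fin.sum_univ_three, Real.dist_eq, sq_abs]

theorem dist_pt3_eq {a b c d e f r : ℝ} (hr : 0 ≤ r)
    (h : (a - d) ^ 2 + (b - e) ^ 2 + (c - f) ^ 2 = r ^ 2) : dist (pt3 a b c) (pt3 d e f) = r := by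
  rw [dist_pt3, h, Real.sqrt_sq hr]

theorem pt3_inj {a b c d e f : ℝ} : pt3 a b c = pt3 d e f ↔ a = d ∧ b = e ∧ c = f := by
  refine ⟨fun h => ⟨congrArg (· 0) h, congrArg (· 1) h, congrArg (· 2) h⟩, ?_⟩
  rintro ⟨rfl, rfl, rfl⟩
  rfl

theorem corner_sq_sum_bound (a b c : ℤ) :
    (b = 0 ∧ c = 0 ∧ (a = 0 ∨ a = 1)) ∨
      34 ≤ 16 * (2 * a - 1) ^ 2 + (8 * b - 1) ^ 2 + (8 * c - 1) ^ 2 := by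
  by_contra! ⟨hF, hlt⟩
  have : -1 < a ∧ a < 2 := by
    constructor <;> nlinarith [sq_nonneg (8 * b - 1), sq_nonneg (8 * c - 1)]
  have : -1 < b ∧ b < 1 := by
    constructor <;> nlinarith [sq_nonneg (2 * a - 1), sq_nonneg (8 * c - 1)]
  have : -1 < c ∧ c < 1 := by
    constructor <;> nlinarith [sq_nonneg (2 * a - 1), sq_nonneg (8 * b - 1)]
  omega

theorem center_sq_sum_bound (a b c : ℤ) :
    (a = 0 ∧ b = 0 ∧ c = 0) ∨ 34 ≤ 64 * a ^ 2 + (8 * b + 3) ^ 2 + (8 * c + 3) ^ 2 := by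
  by_contra! ⟨hF, hlt⟩
  obtain rfl : a = 0 := by nlinarith [sq_nonneg (8 * b + 3), sq_nonneg (8 * c + 3)]
  have : -1 ≤ b ∧ b ≤ 0 := by constructor <;> nlinarith [sq_nonneg (8 * c + 3)]
  have : -1 ≤ c ∧ c ≤ 0 := by constructor <;> nlinarith [sq_nonneg (8 * b + 3)]
  obtain ⟨rfl | rfl, rfl | rfl⟩ : (b = -1 ∨ b = 0) ∧ (c = -1 ∨ c = 0) := by omega
  all_goals simp_all

theorem sqrt_34_div_eight_mul_le_dist_pt3 {x a b c d e f : ℝ} (hx : 0 ≤ x)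
    (h : 34 * x ^ 2 ≤ 64 * ((a - d) ^ 2 + (b - e) ^ 2 + (c - f) ^ 2)) :
    √34 / 8 * x ≤ dist (pt3 a b c) (pt3 d e f) := by
  rw [dist_pt3, Real.le_sqrt (by positivity) (by positivity), mul_pow, div_pow,
    Real.sq_sqrt (by norm_num)]
  linarith

theorem three_mul_sqrt_two_lt_sqrt_34 : 3 * √2 < √34 := by
  rw [show (3 : ℝ) = √(3 ^ 2) by simp, ← Real.sqrt_mul (by norm_num)]
  exact Real.sqrt_lt_sqrt (by norm_num) (by norm_num)

def bccLattice (x : ℝ) : Set (EuclideanSpace ℝ (Fin 3)) :=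
  {q | ∃ v : Fin 3 → ℤ, q = pt3 (x * v 0) (x * v 1) (x * v 2)} ∪
    {q | ∃ v : Fin 3 → ℤ, q = pt3 (x * (v 0 + 1 / 2)) (x * (v 1 + 1 / 2)) (x * (v 2 + 1 / 2))}

def bccFace (x : ℝ) : Set (EuclideanSpace ℝ (Fin 3)) :=
  {pt3 0 0 0, pt3 x 0 0, pt3 (x / 2) (x / 2) (x / 2)}

section
variable {x : ℝ}

theorem dist_center_of_mem_bccFace (hx : 0 ≤ x) {p : EuclideanSpace ℝ (Fin 3)}
    (hp : p ∈ bccFace x) : dist p (pt3 (x / 2) (x / 8) (x / 8)) = 3 * √2 / 8 * x := by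
  have h2 := Real.sq_sqrt (show (0 : ℝ) ≤ 2 by norm_num)
  rcases hp with rfl | rfl | rfl <;>
    exact dist_pt3_eq (by positivity) (by linear_combination (-(9 * x ^ 2) / 64) * h2)

theorem center_mem_affineSpan_bccFace :
    pt3 (x / 2) (x / 8) (x / 8) ∈ affineSpan ℝ (bccFace x) := by
  have hmem : ∀ p ∈ bccFace x, p ∈ affineSpan ℝ (bccFace x) := fun p hp => mem_affineSpan ℝ hp
  have h : pt3 (x / 2) (x / 8) (x / 8) = AffineMap.lineMap
      (AffineMap.lineMap (pt3 0 0 0) (pt3 x 0 0) (1 / 2 : ℝ)) (pt3 (x / 2) (x / 2) (x / 2))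
      (1 / 4 : ℝ) := by
    ext i
    fin_cases i <;> simp [pt3, AffineMap.lineMap_apply] <;> ring
  rw [h]
  refine AffineMap.lineMap_mem _ (AffineMap.lineMap_mem _ ?_ ?_) ?_ <;>
    apply hmem <;> simp [bccFace]

theorem sqrt_34_div_eight_mul_le_dist_center (hx : 0 ≤ x) {p : EuclideanSpace ℝ (Fin 3)}
    (hp : p ∈ bccLattice x \ bccFace x) : √34 / 8 * x ≤ dist p (pt3 (x / 2) (x / 8) (x / 8)) := by
  obtain ⟨hpL | hpL, hpF⟩ := hp
  · obtain ⟨v, rfl⟩ := hpL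
    rcases corner_sq_sum_bound (v 0) (v 1) (v 2) with ⟨h1, h2, h0 | h0⟩ | hN
    · simp [bccFace, h0, h1, h2] at hpF
    · simp [bccFace, h0, h1, h2] at hpF
    apply sqrt_34_div_eight_mul_le_dist_pt3 hx
    have hN' : (34 : ℝ) ≤ 16 * (2 * v 0 - 1) ^ 2 + (8 * v 1 - 1) ^ 2 + (8 * v 2 - 1) ^ 2 := by
      exact_mod_cast hN
    linear_combination x ^ 2 * hN'
  · obtain ⟨v, rfl⟩ := hpL
    rcases center_sq_sum_bound (v 0) (v 1) (v 2) with ⟨h0, h1, h2⟩ | hN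
    · simp [bccFace, h0, h1, h2, div_eq_mul_inv] at hpF
    apply sqrt_34_div_eight_mul_le_dist_pt3 hx
    have hN' : (34 : ℝ) ≤ 64 * v 0 ^ 2 + (8 * v 1 + 3) ^ 2 + (8 * v 2 + 3) ^ 2 := by
      exact_mod_cast hN
    linear_combination x ^ 2 * hN'

theorem witness_mem_bccLattice_diff_bccFace (hx : x ≠ 0) :
    pt3 (x / 2) (x / 2) (-(x / 2)) ∈ bccLattice x \ bccFace x := by
  refine ⟨Or.inr ⟨![0, 0, -1], pt3_inj.mpr ?_⟩, ?_⟩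
  · refine ⟨?_, ?_, ?_⟩ <;> simp <;> ring
  · simp [bccFace, pt3_inj, hx]
    exact fun h => hx (by linarith)

theorem dist_witness_center (hx : 0 ≤ x) :
    dist (pt3 (x / 2) (x / 2) (-(x / 2))) (pt3 (x / 2) (x / 8) (x / 8)) = √34 / 8 * x :=
  dist_pt3_eq (by positivity)
    (by linear_combination (-(x ^ 2) / 64) * Real.sq_sqrt (show (0 : ℝ) ≤ 34 by norm_num))

end

/-- In the body-centered cubic lattice `L` of edge length `x > 0`,
the face `F = {(0,0,0), (x,0,0), (x/2,x/2,x/2)}` has minimum bounding ball of center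
`c = (x/2, x/8, x/8)` and radius `(3√2/8)·x`; the infimum of `‖p − c‖` over `p ∈ L \ F`
equals `(√34/8)·x` and is attained at `(x/2, x/2, −x/2)`; hence the signed distance
equals `((√34 − 3√2)/8)·x > 0`, and in particular `F` satisfies the Minimum-Ball
condition with respect to `L`. -/
theorem bcc_lattice_minimum_ball (x : ℝ) (hx : 0 < x) :
    let L : Set (EuclideanSpace ℝ (Fin 3)) :=
      {q | ∃ v : Fin 3 → ℤ, q = pt3 (x * v 0) (x * v 1) (x * v 2)} ∪
      {q | ∃ v : Fin 3 → ℤ, q = pt3 (x * (v 0 + 1 / 2)) (x * (v 1 + 1 / 2)) (x * (v 2 + 1 / 2))}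
    let F : Set (EuclideanSpace ℝ (Fin 3)) :=
      {pt3 0 0 0, pt3 x 0 0, pt3 (x / 2) (x / 2) (x / 2)}
    let c : EuclideanSpace ℝ (Fin 3) := pt3 (x / 2) (x / 8) (x / 8)
    -- `c` is the circumcenter of `F` (equidistant point lying in the affine span of `F`),
    -- so the minimum bounding ball of `F` has center `c` and radius `(3√2/8)·x`
    (∀ p ∈ F, dist p c = 3 * Real.sqrt 2 / 8 * x) ∧
    c ∈ affineSpan ℝ F ∧
    -- the infimum of `‖p − c‖` over `p ∈ L \ F` equals `(√34/8)·x` and is attained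
    IsLeast ((fun p => dist p c) '' (L \ F)) (Real.sqrt 34 / 8 * x) ∧
    pt3 (x / 2) (x / 2) (-(x / 2)) ∈ L \ F ∧
    dist (pt3 (x / 2) (x / 2) (-(x / 2))) c = Real.sqrt 34 / 8 * x ∧
    -- the signed distance equals `((√34 − 3√2)/8)·x`, which is strictly positive
    Real.sqrt 34 / 8 * x - 3 * Real.sqrt 2 / 8 * x = (Real.sqrt 34 - 3 * Real.sqrt 2) / 8 * x ∧
    0 < (Real.sqrt 34 - 3 * Real.sqrt 2) / 8 * x ∧
    -- Minimum-Ball condition: no point of `L \ F` lies strictly inside the ball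
    ∀ p ∈ L \ F, ¬ dist p c < 3 * Real.sqrt 2 / 8 * x := by
  intro L F c
  have hwit := witness_mem_bccLattice_diff_bccFace hx.ne'
  have hwit_dist := dist_witness_center hx.le
  have hradius : 3 * √2 / 8 * x < √34 / 8 * x := by
    gcongr
    exact three_mul_sqrt_two_lt_sqrt_34
  refine ⟨fun p hp => dist_center_of_mem_bccFace hx.le hp, center_mem_affineSpan_bccFace,
    ⟨⟨_, hwit, hwit_dist⟩, ?_⟩, hwit, hwit_dist, by ring, by linarith, fun p hp => ?_⟩
  · rintro _ ⟨p, hp, rfl⟩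
    exact sqrt_34_div_eight_mul_le_dist_center hx.le hp
  · exact not_lt.mpr (hradius.le.trans (sqrt_34_div_eight_mul_le_dist_center hx.le hp))
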